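/- arXiv:1804.09515 — 2 statements merged into one kernel-verified Lean document; each statement's English description precedes it below -/
import Mathlib

section
/- Let H be an infinite-dimensional complex Hilbert space, let G be a subgroup of U(H), and let (pₙ) be a sequence of mutually orthogonal nonzero orthogonal projections on H with ∑ₙ pₙ ξ = ξ for every ξ ∈ H, satisfying condition (A): for every sequence (gₙ) in G with gₙpₙ = pₙgₙ for all n, every unitary u on H satisfying u pₙ = gₙ pₙ for all n belongs to G. Let W₁ ⊆ W₂ ⊆ ⋯ be an increasing chain of symmetric subsets of G with ⋃ₙ Wₙ = G. Then there exists k ∈ ℕ such that pₖ is full for Wₖ, i.e. for every g ∈ G(pₖ) there exists h ∈ Wₖ with g pₖ = h pₖ. -/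
/-!
Choose, for each `n`, a witness `gₙ ∈ G(pₙ)` to the failure of fullness of `pₙ` for `Wₙ`.
Each `gₙ` fixes the range of `1 - pₙ`, so it commutes with `pₙ` and restricts to a unitary of
the range of `pₙ`; these restrictions assemble into a block-diagonal unitary `u = ∑ₙ gₙ pₙ`,
which lies in `G` by condition (A). Since the `Wₙ` exhaust `G`, `u ∈ Wₘ` for some `m`, and then
`u pₘ = gₘ pₘ` contradicts the choice of `gₘ`.
-/

set_option maxHeartbeats 1000000
set_option synthInstance.maxHeartbeats 400000

/-- `g` is a product of `k` elements of `S`. -/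
def IsProdOf {G : Type*} [Monoid G] (k : ℕ) (S : Set G) (g : G) : Prop :=
  ∃ l : List G, l.length = k ∧ (∀ x ∈ l, x ∈ S) ∧ l.prod = g

/-- A group `G` has *strong uncountable cofinality* if for every increasing chain of subsets
`W₁ ⊆ W₂ ⊆ ⋯` of `G` whose union is all of `G`, there are `n, k` such that every element of
`G` is a product of `k` elements of `W n`. -/
def StrongUncountableCofinality (G : Type*) [Group G] : Prop :=
  ∀ W : ℕ → Set G, Monotone W → (⋃ n, W n) = Set.univ →
    ∃ n k : ℕ, ∀ g : G, IsProdOf k (W n) g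

/-- A group `G` has *`k`-strong uncountable cofinality* if for every increasing chain of subsets
`W₁ ⊆ W₂ ⊆ ⋯` of `G` whose union is all of `G`, there is `n` such that every element of
`G` is a product of `k` elements of `W n`. -/
def KStrongUncountableCofinality (G : Type*) [Group G] (k : ℕ) : Prop :=
  ∀ W : ℕ → Set G, Monotone W → (⋃ n, W n) = Set.univ →
    ∃ n : ℕ, ∀ g : G, IsProdOf k (W n) g

variable {H : Type*} [NormedAddCommGroup H] [InnerProductSpace ℂ H] [CompleteSpace H]

/-- `p` is an orthogonal projection on `H`. -/
def IsOrthoProjection (p : H →L[ℂ] H) : Prop :=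
  IsSelfAdjoint p ∧ p * p = p

/-- `G(p)`: the set of elements of a subgroup `G ≤ U(H)` fixing every vector in the range of
`1 - p` (equivalently, with support at most `p`). -/
def suppSubSet (G : Subgroup (unitary (H →L[ℂ] H))) (p : H →L[ℂ] H) : Set G :=
  {g | ∀ ξ : H, ((g : unitary (H →L[ℂ] H)) : H →L[ℂ] H) ((1 - p) ξ) = (1 - p) ξ}

/-- The set of conjugates of `g` or of `g⁻¹` by elements of `G(p)`. -/
def conjByGp (G : Subgroup (unitary (H →L[ℂ] H))) (p : H →L[ℂ] H) (g : G) : Set G :=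
  {y | ∃ w ∈ suppSubSet G p, y = w * g * w⁻¹ ∨ y = w * g⁻¹ * w⁻¹}

/-- Condition (A): the `p n` are mutually orthogonal nonzero projections summing to the
identity, and any unitary acting as some element of `G` on each `p n` belongs to `G`. -/
def CondA (G : Subgroup (unitary (H →L[ℂ] H))) (p : ℕ → (H →L[ℂ] H)) : Prop :=
  (∀ n, IsOrthoProjection (p n)) ∧ (∀ n, p n ≠ 0) ∧
    (∀ m n, m ≠ n → p m * p n = 0) ∧ (∀ ξ : H, HasSum (fun n => p n ξ) ξ) ∧
    (∀ g : ℕ → G, (∀ n,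
        ((g n : unitary (H →L[ℂ] H)) : H →L[ℂ] H) * p n =
          p n * ((g n : unitary (H →L[ℂ] H)) : H →L[ℂ] H)) →
      ∀ u : unitary (H →L[ℂ] H),
        (∀ n, (u : H →L[ℂ] H) * p n = ((g n : unitary (H →L[ℂ] H)) : H →L[ℂ] H) * p n) →
          u ∈ G)

/-- Condition (B): below every nonzero `p ∈ 𝓋` there is a nonzero `q ∈ 𝓋`, `q ≤ p`, and
`g ∈ G(p)` such that every element of `G(q)` is a product of `n` conjugates (by elements of
`G(p)`) of `g` or of `g⁻¹`. -/
def CondB (G : Subgroup (unitary (H →L[ℂ] H))) (𝓋 : Set (H →L[ℂ] H)) : Prop :=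
  ∀ p ∈ 𝓋, p ≠ 0 → ∃ n : ℕ, ∃ q ∈ 𝓋, q ≠ 0 ∧ p * q = q ∧
    ∃ g ∈ suppSubSet G p, ∀ h ∈ suppSubSet G q, IsProdOf n (conjByGp G p g) h

/-- Condition (C): for each nonzero `p ∈ 𝓋`, the group `G` is boundedly generated by
`G(p)` together with a finite set. -/
def CondC (G : Subgroup (unitary (H →L[ℂ] H))) (𝓋 : Set (H →L[ℂ] H)) : Prop :=
  ∀ p ∈ 𝓋, p ≠ 0 → ∃ m : ℕ, ∃ F : Finset G,
    ∀ x : G, IsProdOf m (suppSubSet G p ∪ ↑F) x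

/-- Condition (B) with a fixed exponent `n`. -/
def CondBFixed (G : Subgroup (unitary (H →L[ℂ] H))) (𝓋 : Set (H →L[ℂ] H)) (n : ℕ) : Prop :=
  ∀ p ∈ 𝓋, p ≠ 0 → ∃ q ∈ 𝓋, q ≠ 0 ∧ p * q = q ∧
    ∃ g ∈ suppSubSet G p, ∀ h ∈ suppSubSet G q, IsProdOf n (conjByGp G p g) h

/-- Condition (C) with a fixed exponent `m`. -/
def CondCFixed (G : Subgroup (unitary (H →L[ℂ] H))) (𝓋 : Set (H →L[ℂ] H)) (m : ℕ) : Prop :=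
  ∀ p ∈ 𝓋, p ≠ 0 → ∃ F : Finset G,
    ∀ x : G, IsProdOf m (suppSubSet G p ∪ ↑F) x

open ContinuousLinearMap InnerProductSpace

theorem commute_of_mul_one_sub_eq {R : Type*} [Ring R] [StarRing R] {u q : R}
    (hu : star u * u = 1) (hq : IsSelfAdjoint q) (h : u * (1 - q) = 1 - q) : Commute u q := by
  have h' : (1 - q) * u = 1 - q := by
    have hstar : (1 - q) * star u = 1 - q := by
      simpa [star_mul, hq.star_eq] using congrArg star h
    calc (1 - q) * u = (1 - q) * star u * u := by rw [hstar]
      _ = 1 - q := by rw [mul_assoc, hu, mul_one]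
  have hl : u * q = u - (1 - q) := by rw [← h]; noncomm_ring
  have hr : q * u = u - (1 - q) := by rw [← h']; noncomm_ring
  exact hl.trans hr.symm

theorem ContinuousLinearMap.apply_apply_of_commute {𝕜 E : Type*} [RCLike 𝕜]
    [NormedAddCommGroup E] [NormedSpace 𝕜 E] {f g : E →L[𝕜] E} (h : Commute f g) (x : E) :
    f (g x) = g (f x) :=
  congr($(h.eq) x)

section ResolutionOfIdentity

variable {𝕜 E ι : Type*} [RCLike 𝕜] [NormedAddCommGroup E] [InnerProductSpace 𝕜 E]
  [CompleteSpace E]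

theorem IsStarProjection.re_inner_apply_self {q : E →L[𝕜] E} (hq : IsStarProjection q) (x : E) :
    RCLike.re ⟪x, q x⟫_𝕜 = ‖q x‖ ^ 2 := by
  have hqq : q (q x) = q x := congr($(hq.isIdempotentElem) x)
  have hsymm : ⟪q x, q x⟫_𝕜 = ⟪x, q (q x)⟫_𝕜 := hq.isSelfAdjoint.isSymmetric x (q x)
  rw [← hqq, ← hsymm, hqq, inner_self_eq_norm_sq]

structure IsResolutionOfIdentity (p : ι → E →L[𝕜] E) : Prop where
  isStarProjection : ∀ i, IsStarProjection (p i)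
  mul_eq_zero : Pairwise fun i j => p i * p j = 0
  hasSum : ∀ x, HasSum (fun i => p i x) x

namespace IsResolutionOfIdentity

variable {p : ι → E →L[𝕜] E}

theorem apply_apply_of_ne (hp : IsResolutionOfIdentity p) {i j : ι} (hij : i ≠ j) (x : E) :
    p i (p j x) = 0 :=
  congr($(hp.mul_eq_zero hij) x)

theorem apply_apply_self (hp : IsResolutionOfIdentity p) (i : ι) (x : E) :
    p i (p i x) = p i x :=
  congr($((hp.isStarProjection i).isIdempotentElem) x)

theorem hasSum_norm_sq (hp : IsResolutionOfIdentity p) (x : E) :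
    HasSum (fun i => ‖p i x‖ ^ 2) (‖x‖ ^ 2) := by
  have h := RCLike.reCLM.hasSum ((innerSL 𝕜 x).hasSum (hp.hasSum x))
  simp only [innerSL_apply_apply, RCLike.reCLM_apply,
    (hp.isStarProjection _).re_inner_apply_self, inner_self_eq_norm_sq] at h
  exact h

theorem orthogonalFamily (hp : IsResolutionOfIdentity p) :
    OrthogonalFamily 𝕜 (fun i => (p i).range) fun i => (p i).range.subtypeₗᵢ := by
  rintro i j hij ⟨_, y, rfl⟩ ⟨_, z, rfl⟩
  change ⟪p i y, p j z⟫_𝕜 = 0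
  rw [show ⟪p i y, p j z⟫_𝕜 = ⟪y, p i (p j z)⟫_𝕜 from
    (hp.isStarProjection i).isSelfAdjoint.isSymmetric y (p j z), hp.apply_apply_of_ne hij,
    inner_zero_right]

variable {T : ι → unitary (E →L[𝕜] E)}

theorem summable_unitary_apply (hp : IsResolutionOfIdentity p)
    (hT : ∀ i, Commute (T i : E →L[𝕜] E) (p i)) (x : E) :
    Summable fun i => (T i : E →L[𝕜] E) (p i x) := by
  have hmem : ∀ i, (T i : E →L[𝕜] E) (p i x) ∈ (p i).range := fun i =>
    ⟨(T i : E →L[𝕜] E) x, (apply_apply_of_commute (hT i).symm x)⟩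
  refine (hp.orthogonalFamily.summable_iff_norm_sq_summable fun i => ⟨_, hmem i⟩).mpr ?_
  simpa only [Submodule.coe_norm, Unitary.norm_map] using (hp.hasSum_norm_sq x).summable

theorem apply_tsum_unitary_apply (hp : IsResolutionOfIdentity p)
    (hT : ∀ i, Commute (T i : E →L[𝕜] E) (p i)) (j : ι) (x : E) :
    p j (∑' i, (T i : E →L[𝕜] E) (p i x)) = (T j : E →L[𝕜] E) (p j x) := by
  rw [(p j).map_tsum (hp.summable_unitary_apply hT x), tsum_eq_single j]
  · rw [apply_apply_of_commute (hT _), hp.apply_apply_self, ← apply_apply_of_commute (hT _)]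
  · intro i hij
    rw [apply_apply_of_commute (hT _), hp.apply_apply_of_ne hij.symm]

theorem norm_tsum_unitary_apply (hp : IsResolutionOfIdentity p)
    (hT : ∀ i, Commute (T i : E →L[𝕜] E) (p i)) (x : E) :
    ‖∑' i, (T i : E →L[𝕜] E) (p i x)‖ = ‖x‖ := by
  have h := hp.hasSum_norm_sq (∑' i, (T i : E →L[𝕜] E) (p i x))
  simp only [hp.apply_tsum_unitary_apply hT, Unitary.norm_map] at h
  exact (sq_eq_sq₀ (norm_nonneg _) (norm_nonneg _)).mp (h.unique (hp.hasSum_norm_sq x))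

noncomputable def blockDiag (hp : IsResolutionOfIdentity p)
    (hT : ∀ i, Commute (T i : E →L[𝕜] E) (p i)) : E →ₗᵢ[𝕜] E where
  toFun x := ∑' i, (T i : E →L[𝕜] E) (p i x)
  map_add' x y := by
    simp only [map_add]
    exact (hp.summable_unitary_apply hT x).tsum_add (hp.summable_unitary_apply hT y)
  map_smul' c x := by
    simp only [map_smul, RingHom.id_apply]
    exact (hp.summable_unitary_apply hT x).tsum_const_smul c
  norm_map' := hp.norm_tsum_unitary_apply hT

theorem blockDiag_apply_apply (hp : IsResolutionOfIdentity p)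
    (hT : ∀ i, Commute (T i : E →L[𝕜] E) (p i)) (j : ι) (x : E) :
    hp.blockDiag hT (p j x) = (T j : E →L[𝕜] E) (p j x) := by
  change ∑' i, (T i : E →L[𝕜] E) (p i (p j x)) = _
  rw [tsum_eq_single j, hp.apply_apply_self]
  intro i hij
  rw [hp.apply_apply_of_ne hij, map_zero]

theorem blockDiag_surjective (hp : IsResolutionOfIdentity p)
    (hT : ∀ i, Commute (T i : E →L[𝕜] E) (p i)) : Function.Surjective (hp.blockDiag hT) := by
  have hT' : ∀ i, Commute ((star (T i) : unitary (E →L[𝕜] E)) : E →L[𝕜] E) (p i) := fun i => by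
    simpa only [Unitary.coe_star, (hp.isStarProjection i).isSelfAdjoint.star_eq]
      using (hT i).star_star
  have hinv : ∀ i z, (T i : E →L[𝕜] E) (((star (T i) : unitary (E →L[𝕜] E)) : E →L[𝕜] E) z) = z :=
    fun i z => congr($(Unitary.coe_mul_star_self (T i)) z)
  intro x
  refine ⟨hp.blockDiag hT' x, ?_⟩
  change ∑' i, (T i : E →L[𝕜] E) (p i (∑' j, _)) = x
  simp only [hp.apply_tsum_unitary_apply hT', hinv]
  exact (hp.hasSum x).tsum_eq

theorem exists_unitary_mul_eq (hp : IsResolutionOfIdentity p)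
    (hT : ∀ i, Commute (T i : E →L[𝕜] E) (p i)) :
    ∃ u : unitary (E →L[𝕜] E), ∀ i, (u : E →L[𝕜] E) * p i = T i * p i :=
  ⟨Unitary.linearIsometryEquiv.symm
      (LinearIsometryEquiv.ofSurjective _ (hp.blockDiag_surjective hT)),
    fun i => ext (hp.blockDiag_apply_apply hT i)⟩

end IsResolutionOfIdentity

end ResolutionOfIdentity

theorem commute_of_mem_suppSubSet {G : Subgroup (unitary (H →L[ℂ] H))} {q : H →L[ℂ] H}
    (hq : IsSelfAdjoint q) {g : G} (hg : g ∈ suppSubSet G q) :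
    Commute ((g : unitary (H →L[ℂ] H)) : H →L[ℂ] H) q :=
  commute_of_mul_one_sub_eq (Unitary.star_mul_self_of_mem (g : unitary (H →L[ℂ] H)).prop) hq
    (ext hg)

theorem exists_full_projection_general
    (G : Subgroup (unitary (H →L[ℂ] H))) (p : ℕ → (H →L[ℂ] H)) (hA : CondA G p)
    (W : ℕ → Set G)
    (hexh : (⋃ n, W n) = Set.univ) :
    ∃ k : ℕ, ∀ g ∈ suppSubSet G (p k), ∃ h ∈ W k,
      ((g : unitary (H →L[ℂ] H)) : H →L[ℂ] H) * p k =
        ((h : unitary (H →L[ℂ] H)) : H →L[ℂ] H) * p k := by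
  obtain ⟨hproj, -, horth, hsum, hdiag⟩ := hA
  have hp : IsResolutionOfIdentity p :=
    ⟨fun n => ⟨(hproj n).2, (hproj n).1⟩, fun m n hmn => horth m n hmn, hsum⟩
  by_contra! hfull
  choose g hgp hgW using hfull
  have hcomm n := commute_of_mem_suppSubSet (hproj n).1 (hgp n)
  obtain ⟨u, hu⟩ := hp.exists_unitary_mul_eq hcomm
  obtain ⟨m, hm⟩ := Set.mem_iUnion.mp (hexh ▸ Set.mem_univ (⟨u, hdiag g hcomm u hu⟩ : G))
  exact hgW m _ hm (hu m).symm

/-- Lemma 1: given condition (A) and an exhaustive increasing chain of symmetric subsets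
`(W n)` of `G`, some `p k` is full for `W k`. -/
theorem exists_full_projection (hdim : ¬ FiniteDimensional ℂ H)
    (G : Subgroup (unitary (H →L[ℂ] H))) (p : ℕ → (H →L[ℂ] H)) (hA : CondA G p)
    (W : ℕ → Set G) (hmono : Monotone W) (hsymm : ∀ n, (W n)⁻¹ = W n)
    (hexh : (⋃ n, W n) = Set.univ) :
    ∃ k : ℕ, ∀ g ∈ suppSubSet G (p k), ∃ h ∈ W k,
      ((g : unitary (H →L[ℂ] H)) : H →L[ℂ] H) * p k =
        ((h : unitary (H →L[ℂ] H)) : H →L[ℂ] H) * p k :=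
  exists_full_projection_general G p hA W hexh
end

section
/- Let H be an infinite-dimensional complex Hilbert space, let G be a subgroup of U(H), and let 𝒫 be a set of orthogonal projections on H satisfying conditions (A) and (B): (A) there exists a sequence (pₙ) of mutually orthogonal nonzero projections in 𝒫 with ∑ₙ pₙ ξ = ξ for every ξ ∈ H, such that for every sequence (gₙ) in G with gₙpₙ = pₙgₙ for all n, every unitary u on H satisfying u pₙ = gₙ pₙ for all n belongs to G; (B) for each nonzero p ∈ 𝒫 there exist n ∈ ℕ, a nonzero projection q ∈ 𝒫 with q ≤ p, and g ∈ G(p) such that every element of G(q) is a product of n conjugates, by elements of G(p), of g or of g⁻¹. Let W₁ ⊆ W₂ ⊆ ⋯ be an increasing chain of symmetric subsets of G with ⋃ₙ Wₙ = G and let k be such that pₖ is full for Wₖ. Then there exist n ∈ ℕ, a nonzero projection q ∈ 𝒫 with q ≤ pₖ, and l ∈ ℕ such that every element of G(q) is a product of 3n elements of W_l. -/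
set_option maxHeartbeats 1000000
set_option synthInstance.maxHeartbeats 400000

variable {H : Type*} [NormedAddCommGroup H] [InnerProductSpace ℂ H] [CompleteSpace H]

/-! If `w ∈ G(p)` agrees with `h` on the range of `p`, then `h⁻¹ w` is the identity on the range
of `p` while `g ∈ G(p)` is the identity on the range of `1 - p`, so the two commute and
`w g w⁻¹ = h g h⁻¹`. Applied to `p = p k`, which is full for `W k`, and to the `g` given by
condition (B), every conjugate of `g` or `g⁻¹` by `G(p k)` is a product of three elements of
`W l` as soon as `l ≥ k` and `g ∈ W l`; the `n` such conjugates given by (B) yield `3n`. -/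

theorem IsProdOf.trans {M : Type*} [Monoid M] {S T : Set M} {m n : ℕ} {x : M}
    (hx : IsProdOf n S x) (hST : ∀ y ∈ S, IsProdOf m T y) : IsProdOf (m * n) T x := by
  obtain ⟨L, rfl, hLS, rfl⟩ := hx
  induction L with
  | nil => exact ⟨[], by simp, by simp, by simp⟩
  | cons a L ih =>
    obtain ⟨la, hla, hlaT, rfl⟩ := hST a (hLS a List.mem_cons_self)
    obtain ⟨lL, hlL, hlLT, hlLprod⟩ := ih fun y hy => hLS y (List.mem_cons_of_mem _ hy)
    refine ⟨la ++ lL, by simp [hla, hlL, Nat.mul_succ, add_comm], ?_, by simp [hlLprod]⟩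
    simpa only [List.mem_append] using fun y hy => hy.elim (hlaT y) (hlLT y)

theorem isProdOf_three_conj {M : Type*} [Group M] {S : Set M} (hS : S⁻¹ = S) {h x : M}
    (hh : h ∈ S) (hx : x ∈ S) : IsProdOf 3 S (h * x * h⁻¹) := by
  have hh' : h⁻¹ ∈ S := hS ▸ Set.inv_mem_inv.mpr hh
  refine ⟨[h, x, h⁻¹], rfl, ?_, by simp [mul_assoc]⟩
  simp only [List.mem_cons, List.not_mem_nil, or_false]
  rintro y (rfl | rfl | rfl) <;> assumption

theorem mul_eq_self_of_unitary_mul_eq_self {A : Type*} [Monoid A] [StarMul A] {U Q : A}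
    (hU : U ∈ unitary A) (hQ : IsSelfAdjoint Q) (hUQ : U * Q = Q) : Q * U = Q := by
  have hQU : Q * star U = Q := by simpa [hQ.star_eq] using congrArg star hUQ
  rw [← hQU, mul_assoc, Unitary.star_mul_self_of_mem hU, mul_one, hQU]

theorem commute_of_mul_eq_self_of_mul_one_sub_eq_one_sub {A : Type*} [Ring A] [StarRing A]
    {P U V : A} (hP : IsSelfAdjoint P) (hU : U ∈ unitary A) (hV : V ∈ unitary A)
    (hUP : U * P = P) (hV1 : V * (1 - P) = 1 - P) : Commute U V := by
  have hPU : P * U = P := mul_eq_self_of_unitary_mul_eq_self hU hP hUP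
  have h1V : (1 - P) * V = 1 - P :=
    mul_eq_self_of_unitary_mul_eq_self hV ((IsSelfAdjoint.one A).sub hP) hV1
  have hVP : V * P = P * V := by
    have hVP' : V * P = V - (1 - P) := by rw [← hV1]; noncomm_ring
    have hPV' : P * V = V - (1 - P) := by rw [← h1V]; noncomm_ring
    rw [hVP', hPV']
  calc U * V = U * (V * P) + U * (V * (1 - P)) := by noncomm_ring
    _ = P * V + (U - P) := by rw [hV1, hVP, ← mul_assoc, hUP, mul_sub, mul_one, hUP]
    _ = V * (P * U) + V * (1 - P) * U := by rw [hPU, hV1, hVP, sub_mul, one_mul, hPU]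
    _ = V * U := by noncomm_ring

section
variable {G : Subgroup (unitary (H →L[ℂ] H))}

theorem mem_suppSubSet_iff {p : H →L[ℂ] H} {g : G} :
    g ∈ suppSubSet G p ↔ (g : H →L[ℂ] H) * (1 - p) = 1 - p := by
  rw [ContinuousLinearMap.ext_iff]; rfl

theorem coe_inv_mul_mul_eq_self {p : H →L[ℂ] H} {w h : G}
    (hwh : (w : H →L[ℂ] H) * p = h * p) : ((h⁻¹ * w : G) : H →L[ℂ] H) * p = p := by
  simp [mul_assoc, hwh, ← Unitary.star_eq_inv, Unitary.coe_star, ← mul_assoc (star _)]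

theorem conj_eq_conj_of_mul_eq_mul {p : H →L[ℂ] H} (hp : IsSelfAdjoint p) {g w h : G}
    (hg : g ∈ suppSubSet G p) (hwh : (w : H →L[ℂ] H) * p = h * p) :
    w * g * w⁻¹ = h * g * h⁻¹ := by
  have hcomm : Commute (h⁻¹ * w) g := by
    have := commute_of_mul_eq_self_of_mul_one_sub_eq_one_sub hp (h⁻¹ * w : G).1.2 g.1.2
      (coe_inv_mul_mul_eq_self hwh) (mem_suppSubSet_iff.mp hg)
    exact Subtype.ext (Subtype.ext this)
  calc w * g * w⁻¹ = h * ((h⁻¹ * w) * g * (h⁻¹ * w)⁻¹) * h⁻¹ := by group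
    _ = h * g * h⁻¹ := by rw [hcomm.mul_inv_cancel]

theorem isProdOf_three_of_mem_conjByGp {p : H →L[ℂ] H} (hp : IsSelfAdjoint p) {g x : G}
    (hg : g ∈ suppSubSet G p) {S : Set G} (hS : S⁻¹ = S) (hgS : g ∈ S)
    (hfull : ∀ w ∈ suppSubSet G p, ∃ h ∈ S, (w : H →L[ℂ] H) * p = h * p)
    (hx : x ∈ conjByGp G p g) : IsProdOf 3 S x := by
  obtain ⟨w, hw, rfl | rfl⟩ := hx <;> obtain ⟨h, hhS, hwh⟩ := hfull w hw
  · rw [conj_eq_conj_of_mul_eq_mul hp hg hwh]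
    exact isProdOf_three_conj hS hhS hgS
  · rw [← conj_inv, conj_eq_conj_of_mul_eq_mul hp hg hwh, conj_inv]
    exact isProdOf_three_conj hS hhS (hS ▸ Set.inv_mem_inv.mpr hgS)

end

theorem subgroup_in_power_of_chain_general
    (G : Subgroup (unitary (H →L[ℂ] H))) (𝓋 : Set (H →L[ℂ] H))
    (p : ℕ → (H →L[ℂ] H)) (hp𝓋 : ∀ n, p n ∈ 𝓋) (hA : CondA G p) (hB : CondB G 𝓋)
    (W : ℕ → Set G) (hmono : Monotone W) (hsymm : ∀ n, (W n)⁻¹ = W n)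
    (hexh : (⋃ n, W n) = Set.univ)
    (k : ℕ)
    (hfull : ∀ g ∈ suppSubSet G (p k), ∃ h ∈ W k,
      ((g : unitary (H →L[ℂ] H)) : H →L[ℂ] H) * p k =
        ((h : unitary (H →L[ℂ] H)) : H →L[ℂ] H) * p k) :
    ∃ n : ℕ, ∃ q ∈ 𝓋, q ≠ 0 ∧ p k * q = q ∧ ∃ l : ℕ,
      ∀ h ∈ suppSubSet G q, IsProdOf (3 * n) (W l) h := by
  obtain ⟨hproj, hp0, -⟩ := hA
  obtain ⟨n, q, hq𝓋, hq0, hpq, g, hg, hGq⟩ := hB (p k) (hp𝓋 k) (hp0 k)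
  obtain ⟨l₀, hgl₀⟩ := Set.mem_iUnion.mp (hexh ▸ Set.mem_univ g)
  let l := max k l₀
  have hfull_l : ∀ w ∈ suppSubSet G (p k), ∃ h ∈ W l, (w : H →L[ℂ] H) * p k = h * p k :=
    fun w hw => (hfull w hw).imp fun h ⟨hh, hwh⟩ => ⟨hmono (le_max_left k l₀) hh, hwh⟩
  refine ⟨n, q, hq𝓋, hq0, hpq, l, fun h hh => (hGq h hh).trans fun x hx => ?_⟩
  exact isProdOf_three_of_mem_conjByGp (hproj k).1 hg (hsymm l)
    (hmono (le_max_right k l₀) hgl₀) hfull_l hx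

/-- Lemma 2: under conditions (A) and (B), if `p k` is full for `W k`, then all of `G(q)` for
some nonzero `q ≤ p k`, `q ∈ 𝓋`, consists of products of `3n` elements of some `W l`. -/
theorem subgroup_in_power_of_chain (hdim : ¬ FiniteDimensional ℂ H)
    (G : Subgroup (unitary (H →L[ℂ] H))) (𝓋 : Set (H →L[ℂ] H))
    (p : ℕ → (H →L[ℂ] H)) (hp𝓋 : ∀ n, p n ∈ 𝓋) (hA : CondA G p) (hB : CondB G 𝓋)
    (W : ℕ → Set G) (hmono : Monotone W) (hsymm : ∀ n, (W n)⁻¹ = W n)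
    (hexh : (⋃ n, W n) = Set.univ)
    (k : ℕ)
    (hfull : ∀ g ∈ suppSubSet G (p k), ∃ h ∈ W k,
      ((g : unitary (H →L[ℂ] H)) : H →L[ℂ] H) * p k =
        ((h : unitary (H →L[ℂ] H)) : H →L[ℂ] H) * p k) :
    ∃ n : ℕ, ∃ q ∈ 𝓋, q ≠ 0 ∧ p k * q = q ∧ ∃ l : ℕ,
      ∀ h ∈ suppSubSet G q, IsProdOf (3 * n) (W l) h :=
  subgroup_in_power_of_chain_general G 𝓋 p hp𝓋 hA hB W hmono hsymm hexh k hfull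
end
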